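/- Let 1<p≤q<∞ with conjugate exponents p',q', and let σ, ω be weights. Suppose there is a constant C such that ‖T_α(fσ)‖_{L^{q,∞}(ω)} ≤ C ‖f‖_{L^p(σ)} for all nonnegative f ∈ L^p(σ), where ‖g‖_{L^{q,∞}(ω)} = sup_{λ>0} λ · ω({|g|>λ})^{1/q}. Then the testing condition holds: there is a constant C' depending only on p and q such that for every i∈ℤ and E∈𝓕_i⁰, (∫_E (Σ_{j≥i} 𝔼_j(ω) α_j)^{p'} σ dμ)^{1/p'} ≤ C' C · ω(E)^{1/q'}. -/

import Mathlib

/-!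
Write `Φ = ∑_{j ≥ i} 𝔼ⱼ(ω) αⱼ`. For `f ≥ 0` and `E ∈ 𝓕ᵢ`, moving each `𝔼ⱼ` across the integral
(it is self-adjoint, and `1_E` is `𝓕ⱼ`-measurable for `j ≥ i`) gives
`∫_E Φ f σ ≤ ∫_E ω T_α(fσ)`. On the finite measure `1_E ω`, a function in weak `L^q` is
integrable with `‖g‖₁ ≤ q' ‖g‖_{L^{q,∞}} ω(E)^{1/q'}`, so the weak type bound yields
`∫_E Φ f σ ≤ q' C ω(E)^{1/q'} ‖f‖_{L^p(σ)}`. Testing this against the extremal function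
`f = 1_E min(Φ, n)^{p'-1}` of Hölder's inequality and letting `n → ∞` bounds
`‖1_E Φ‖_{L^{p'}(σ)}` by the same constant.
-/

open MeasureTheory Set
open scoped ENNReal

theorem ENNReal.iSup_min_natCast (a : ℝ≥0∞) : ⨆ n : ℕ, min a n = a := by
  rw [← inf_iSup_eq, ENNReal.iSup_natCast, inf_top_eq]

theorem ENNReal.iSup_rpow {ι : Sort*} (f : ι → ℝ≥0∞) {r : ℝ} (hr : 0 < r) :
    (⨆ i, f i) ^ r = ⨆ i, f i ^ r :=
  (ENNReal.orderIsoRpow r hr).map_iSup f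

theorem ENNReal.rpow_one_sub_le_of_le_mul_rpow {A B : ℝ≥0∞} {r : ℝ} (hr : r < 1)
    (hA : A ≠ ∞) (h : A ≤ B * A ^ r) : A ^ (1 - r) ≤ B := by
  rcases eq_or_ne A 0 with rfl | hA0
  · rw [ENNReal.zero_rpow_of_pos (sub_pos.mpr hr)]
    exact zero_le
  calc A ^ (1 - r) = A * A ^ (-r) := by
        rw [sub_eq_add_neg, ENNReal.rpow_add _ _ hA0 hA, ENNReal.rpow_one]
    _ ≤ B * A ^ r * A ^ (-r) := by gcongr
    _ = B := by
        rw [mul_assoc, ← ENNReal.rpow_add _ _ hA0 hA, add_neg_cancel, ENNReal.rpow_zero, mul_one]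

theorem ENNReal.le_mul_rpow_neg_of_mul_rpow_le {a s K : ℝ≥0∞} {q : ℝ} (hq : 0 < q)
    (hs0 : s ≠ 0) (hs : s ≠ ∞) (h : s * a ^ (1 / q) ≤ K) : a ≤ K ^ q * s ^ (-q) := by
  have h' : a ^ (1 / q) ≤ K / s := by
    rwa [ENNReal.le_div_iff_mul_le (Or.inl hs0) (Or.inl hs), mul_comm]
  calc a = (a ^ (1 / q)) ^ q := by
        rw [← ENNReal.rpow_mul, one_div_mul_cancel hq.ne', ENNReal.rpow_one]
    _ ≤ (K / s) ^ q := ENNReal.rpow_le_rpow h' hq.le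
    _ = K ^ q * s ^ (-q) := by
        rw [ENNReal.div_rpow_of_nonneg _ _ hq.le, ENNReal.rpow_neg, div_eq_mul_inv]

section WeakType

theorem Real.mul_add_rpow_div_eq {q w k : ℝ} (hq : 1 < q) (hw : 0 < w) (hk : 0 < k) :
    w * (k * w ^ (-(1 / q))) + k ^ q * ((k * w ^ (-(1 / q))) ^ (1 - q) / (q - 1))
      = q / (q - 1) * k * w ^ (1 - 1 / q) := by
  have hq1 : q - 1 ≠ 0 := (sub_pos.mpr hq).ne'
  have e1 : w * w ^ (-(1 / q)) = w ^ (1 - 1 / q) := by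
    rw [sub_eq_add_neg, Real.rpow_add hw, Real.rpow_one]
  have e2 : (k * w ^ (-(1 / q))) ^ (1 - q) = k ^ (1 - q) * w ^ (1 - 1 / q) := by
    rw [Real.mul_rpow hk.le (Real.rpow_nonneg hw.le _), ← Real.rpow_mul hw.le]
    congr 2
    field_simp
    ring
  have e3 : k ^ q * k ^ (1 - q) = k := by
    rw [← Real.rpow_add hk, add_sub_cancel, Real.rpow_one]
  calc _ = k * (w * w ^ (-(1 / q))) + (k ^ q * k ^ (1 - q)) * w ^ (1 - 1 / q) / (q - 1) := by
        rw [e2]; ring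
    _ = _ := by rw [e1, e3]; field_simp; ring

theorem lintegral_Ioi_ofReal_rpow_neg {q : ℝ} (hq : 1 < q) {t₀ : ℝ} (ht₀ : 0 < t₀) :
    ∫⁻ t in Ioi t₀, ENNReal.ofReal t ^ (-q) = ENNReal.ofReal (t₀ ^ (1 - q) / (q - 1)) := by
  have hpow : -q < -1 := neg_lt_neg hq
  rw [setLIntegral_congr_fun measurableSet_Ioi fun t ht =>
      ENNReal.ofReal_rpow_of_pos (ht₀.trans ht),
    ← ofReal_integral_eq_lintegral_ofReal (integrableOn_Ioi_rpow_of_lt hpow ht₀)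
      ((ae_restrict_mem measurableSet_Ioi).mono fun t ht =>
        (Real.rpow_pos_of_pos (ht₀.trans ht) _).le),
    integral_Ioi_rpow_of_lt hpow ht₀]
  congr 1
  rw [neg_add_eq_sub, div_eq_div_iff (sub_ne_zero.mpr hq.ne) (sub_ne_zero.mpr hq.ne')]
  ring

/-- Split the integral at `t₀ = K W^{-1/q}`, where the two terms of the minimum cross. -/
theorem lintegral_Ioi_min_mul_rpow_neg_le {q : ℝ} (hq : 1 < q) (W K : ℝ≥0∞) :
    ∫⁻ t in Ioi (0 : ℝ), min W (K ^ q * ENNReal.ofReal t ^ (-q))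
      ≤ ENNReal.ofReal (q / (q - 1)) * K * W ^ (1 - 1 / q) := by
  have hq0 : 0 < q := one_pos.trans hq
  have hq' : 0 < q / (q - 1) := div_pos hq0 (sub_pos.mpr hq)
  have hexp : 0 < 1 - 1 / q := sub_pos.mpr ((div_lt_one hq0).mpr hq)
  rcases eq_or_ne W 0 with rfl | hW0
  · simp
  rcases eq_or_ne K 0 with rfl | hK0
  · simp [ENNReal.zero_rpow_of_pos hq0]
  by_cases hinf : W = ∞ ∨ K = ∞
  · refine le_of_le_of_eq le_top ?_
    have hq'0 : ENNReal.ofReal (q / (q - 1)) ≠ 0 := (ENNReal.ofReal_pos.mpr hq').ne'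
    rcases hinf with rfl | rfl
    · rw [ENNReal.top_rpow_of_pos hexp, ENNReal.mul_top (mul_ne_zero hq'0 hK0)]
    · rw [ENNReal.mul_top hq'0, ENNReal.top_mul
        (ENNReal.rpow_pos_of_nonneg (pos_iff_ne_zero.mpr hW0) hexp.le).ne']
  obtain ⟨hW, hK⟩ := not_or.mp hinf
  obtain ⟨w, hw, rfl⟩ : ∃ w : ℝ, 0 < w ∧ W = ENNReal.ofReal w :=
    ⟨W.toReal, ENNReal.toReal_pos hW0 hW, (ENNReal.ofReal_toReal hW).symm⟩
  obtain ⟨k, hk, rfl⟩ : ∃ k : ℝ, 0 < k ∧ K = ENNReal.ofReal k :=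
    ⟨K.toReal, ENNReal.toReal_pos hK0 hK, (ENNReal.ofReal_toReal hK).symm⟩
  set t₀ := k * w ^ (-(1 / q))
  have ht₀ : 0 < t₀ := by positivity
  rw [← Ioc_union_Ioi_eq_Ioi ht₀.le, lintegral_union measurableSet_Ioi Ioc_disjoint_Ioi_same]
  calc _ ≤ (∫⁻ _ in Ioc 0 t₀, ENNReal.ofReal w)
        + ∫⁻ t in Ioi t₀, ENNReal.ofReal k ^ q * ENNReal.ofReal t ^ (-q) := by
        gcongr with t <;> simp
    _ = ENNReal.ofReal (w * t₀ + k ^ q * (t₀ ^ (1 - q) / (q - 1))) := by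
        rw [setLIntegral_const, Real.volume_Ioc, sub_zero, lintegral_const_mul _ (by fun_prop),
          lintegral_Ioi_ofReal_rpow_neg hq ht₀, ENNReal.ofReal_rpow_of_pos hk,
          ← ENNReal.ofReal_mul hw.le, ← ENNReal.ofReal_mul (by positivity),
          ENNReal.ofReal_add (by positivity) (by positivity)]
    _ = _ := by
        rw [Real.mul_add_rpow_div_eq hq hw hk, ENNReal.ofReal_mul (by positivity),
          ENNReal.ofReal_mul hq'.le, ENNReal.ofReal_rpow_of_pos hw]

variable {Ω : Type*} {m0 : MeasurableSpace Ω}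

theorem lintegral_le_of_weakType {ν : Measure Ω} {T : Ω → ℝ≥0∞} (hT : AEMeasurable T ν)
    {q : ℝ} (hq : 1 < q) {K : ℝ≥0∞}
    (hweak : ∀ t : ℝ, 0 < t →
      ENNReal.ofReal t * ν {x | ENNReal.ofReal t < T x} ^ (1 / q) ≤ K) :
    ∫⁻ x, T x ∂ν ≤ ENNReal.ofReal (q / (q - 1)) * K * ν univ ^ (1 - 1 / q) := by
  have hdist : ∀ t : ℝ, 0 < t →
      ν {x | ENNReal.ofReal t < T x} ≤ min (ν univ) (K ^ q * ENNReal.ofReal t ^ (-q)) :=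
    fun t ht => le_min (measure_mono (subset_univ _))
      (ENNReal.le_mul_rpow_neg_of_mul_rpow_le (one_pos.trans hq)
        (ENNReal.ofReal_pos.mpr ht).ne' ENNReal.ofReal_ne_top (hweak t ht))
  -- Truncate `T` at height `M` to apply the real layer-cake formula.
  have htrunc : ∀ M : ℕ, ∫⁻ x, min (T x) M ∂ν
      ≤ ENNReal.ofReal (q / (q - 1)) * K * ν univ ^ (1 - 1 / q) := by
    intro M
    have hfin : ∀ x, min (T x) M ≠ ∞ :=
      fun x => ((min_le_right _ _).trans_lt (ENNReal.natCast_lt_top M)).ne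
    calc ∫⁻ x, min (T x) M ∂ν = ∫⁻ x, ENNReal.ofReal (min (T x) M).toReal ∂ν := by
          simp_rw [ENNReal.ofReal_toReal (hfin _)]
      _ = ∫⁻ t in Ioi 0, ν {x | t < (min (T x) M).toReal} :=
          lintegral_eq_lintegral_meas_lt ν (ae_of_all _ fun _ => ENNReal.toReal_nonneg)
            (hT.min aemeasurable_const).ennreal_toReal
      _ ≤ ∫⁻ t in Ioi 0, min (ν univ) (K ^ q * ENNReal.ofReal t ^ (-q)) := by
          refine setLIntegral_mono' measurableSet_Ioi fun t ht =>
            (measure_mono fun x hx => ?_).trans (hdist t ht)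
          exact ((ENNReal.ofReal_lt_iff_lt_toReal ht.le (hfin x)).mpr hx).trans_le
            (min_le_left _ _)
      _ ≤ _ := lintegral_Ioi_min_mul_rpow_neg_le hq _ _
  calc ∫⁻ x, T x ∂ν = ∫⁻ x, ⨆ M : ℕ, min (T x) M ∂ν := by
        simp_rw [ENNReal.iSup_min_natCast]
    _ = ⨆ M : ℕ, ∫⁻ x, min (T x) M ∂ν :=
        lintegral_iSup' (fun M => hT.min aemeasurable_const)
          (ae_of_all _ fun x _ _ hMN => min_le_min le_rfl (Nat.cast_le.mpr hMN))
    _ ≤ _ := iSup_le htrunc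

theorem setLIntegral_ofReal_mul_le_of_weakType {μ : Measure Ω} {ω : Ω → ℝ}
    (hω : AEMeasurable ω μ) {E : Set Ω} {T : Ω → ℝ≥0∞}
    (hT : Measurable T) {q : ℝ} (hq : 1 < q) {K : ℝ≥0∞}
    (hweak : ∀ t : ℝ, 0 < t → ENNReal.ofReal t *
      (∫⁻ x in {x | ENNReal.ofReal t < T x}, ENNReal.ofReal (ω x) ∂μ) ^ (1 / q) ≤ K) :
    ∫⁻ x in E, ENNReal.ofReal (ω x) * T x ∂μ
      ≤ ENNReal.ofReal (q / (q - 1)) * K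
        * (∫⁻ x in E, ENNReal.ofReal (ω x) ∂μ) ^ (1 - 1 / q) := by
  set ν := (μ.restrict E).withDensity fun x => ENNReal.ofReal (ω x)
  have hω' : AEMeasurable (fun x => ENNReal.ofReal (ω x)) (μ.restrict E) :=
    ENNReal.measurable_ofReal.comp_aemeasurable hω.restrict
  have hνweak : ∀ t : ℝ, 0 < t →
      ENNReal.ofReal t * ν {x | ENNReal.ofReal t < T x} ^ (1 / q) ≤ K := by
    intro t ht
    refine le_trans ?_ (hweak t ht)
    gcongr
    rw [withDensity_apply _ (measurableSet_lt measurable_const hT)]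
    exact lintegral_mono' (Measure.restrict_mono le_rfl Measure.restrict_le_self) le_rfl
  have := lintegral_le_of_weakType hT.aemeasurable hq hνweak
  rwa [lintegral_withDensity_eq_lintegral_mul₀ hω' hT.aemeasurable,
    withDensity_apply _ MeasurableSet.univ, Measure.restrict_univ] at this

end WeakType

section LpDuality

theorem ENNReal.ofReal_toReal_rpow_sub_one_rpow {a : ℝ≥0∞} (ha : a ≠ ∞) {p p' : ℝ}
    (h : p'.HolderConjugate p) : ENNReal.ofReal ((a ^ (p' - 1)).toReal ^ p) = a ^ p' := by
  rw [ENNReal.toReal_rpow, ← ENNReal.rpow_mul, h.sub_one_mul_conj,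
    ENNReal.ofReal_toReal (ENNReal.rpow_ne_top_of_nonneg h.nonneg ha)]

theorem ENNReal.rpow_eq_mul_ofReal_toReal_rpow_sub_one {a : ℝ≥0∞} (ha : a ≠ ∞) {p p' : ℝ}
    (h : p'.HolderConjugate p) : a ^ p' = a * ENNReal.ofReal ((a ^ (p' - 1)).toReal) := by
  rw [ENNReal.ofReal_toReal (ENNReal.rpow_ne_top_of_nonneg h.sub_one_pos.le ha)]
  calc a ^ p' = a ^ (1 + (p' - 1)) := by rw [add_sub_cancel]
    _ = a * a ^ (p' - 1) := by
      rw [ENNReal.rpow_add_of_nonneg _ _ zero_le_one h.sub_one_pos.le, ENNReal.rpow_one]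

variable {Ω : Type*} {m0 : MeasurableSpace Ω} {μ : Measure Ω} {E : Set Ω} {Φ : Ω → ℝ≥0∞}
  {σ : Ω → ℝ} {p : ℝ} {B : ℝ≥0∞}

theorem rpow_setLIntegral_min_rpow_le_of_forall (hE : MeasurableSet E) (hΦ : Measurable Φ)
    (hσ : Integrable σ μ) (hp : 1 < p)
    (hB : ∀ f : Ω → ℝ, Measurable f → 0 ≤ f → Integrable (fun x => f x * σ x) μ →
      Integrable (fun x => f x ^ p * σ x) μ →
      ∫⁻ x in E, Φ x * ENNReal.ofReal (f x * σ x) ∂μ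
        ≤ B * (∫⁻ x, ENNReal.ofReal (f x ^ p * σ x) ∂μ) ^ (1 / p)) (n : ℕ) :
    (∫⁻ x in E, min (Φ x) n ^ (p / (p - 1)) * ENNReal.ofReal (σ x) ∂μ) ^ (1 - 1 / p) ≤ B := by
  set p' := p / (p - 1)
  have hpp' : p'.HolderConjugate p := (Real.HolderConjugate.conjExponent hp).symm
  set Ψ : Ω → ℝ≥0∞ := fun x => min (Φ x) n
  have hΨ : ∀ x, Ψ x ≠ ∞ := fun x => ((min_le_right _ _).trans_lt (ENNReal.natCast_lt_top n)).ne
  -- The extremal function of Hölder's inequality: on `E`, `f ^ p = f * Ψ = Ψ ^ p'`.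
  set f : Ω → ℝ := E.indicator fun x => (Ψ x ^ (p' - 1)).toReal
  have hf : Measurable f := ((hΦ.min measurable_const).pow_const _).ennreal_toReal.indicator hE
  have hf0 : 0 ≤ f := indicator_nonneg fun _ _ => ENNReal.toReal_nonneg
  have hfE : ∀ x ∈ E, f x = (Ψ x ^ (p' - 1)).toReal := fun x hx => indicator_of_mem hx _
  have hf_le : ∀ x, ‖f x‖ ≤ ((n : ℝ≥0∞) ^ (p' - 1)).toReal := fun x => by
    rw [Real.norm_of_nonneg (hf0 x)]
    refine indicator_le' (fun x _ => ENNReal.toReal_mono ?_ ?_)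
      (fun _ _ => ENNReal.toReal_nonneg) x
    · exact ENNReal.rpow_ne_top_of_nonneg hpp'.sub_one_pos.le (ENNReal.natCast_ne_top n)
    · exact ENNReal.rpow_le_rpow (min_le_right _ _) hpp'.sub_one_pos.le
  have hfσ : Integrable (fun x => f x * σ x) μ :=
    hσ.bdd_mul hf.aestronglyMeasurable (ae_of_all _ hf_le)
  have hfpσ : Integrable (fun x => f x ^ p * σ x) μ :=
    hσ.bdd_mul (hf.pow_const p).aestronglyMeasurable (ae_of_all _ fun x => by
      rw [Real.norm_of_nonneg (Real.rpow_nonneg (hf0 x) p)]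
      exact Real.rpow_le_rpow (hf0 x) ((Real.le_norm_self _).trans (hf_le x)) hpp'.symm.nonneg)
  have hnorm : ∫⁻ x, ENNReal.ofReal (f x ^ p * σ x) ∂μ
      = ∫⁻ x in E, Ψ x ^ p' * ENNReal.ofReal (σ x) ∂μ := by
    rw [← lintegral_indicator hE]
    refine lintegral_congr fun x => ?_
    by_cases hx : x ∈ E
    · rw [indicator_of_mem hx, ENNReal.ofReal_mul (Real.rpow_nonneg (hf0 x) p), hfE x hx,
        ENNReal.ofReal_toReal_rpow_sub_one_rpow (hΨ x) hpp']
    · simp [f, hx, Real.zero_rpow hpp'.symm.ne_zero]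
  have hdual : ∫⁻ x in E, Ψ x ^ p' * ENNReal.ofReal (σ x) ∂μ
      ≤ ∫⁻ x in E, Φ x * ENNReal.ofReal (f x * σ x) ∂μ := by
    refine setLIntegral_mono' hE fun x hx => ?_
    rw [ENNReal.ofReal_mul (hf0 x), hfE x hx, ← mul_assoc,
      ENNReal.rpow_eq_mul_ofReal_toReal_rpow_sub_one (hΨ x) hpp']
    gcongr
    exact min_le_left _ _
  have hB' := hB f hf hf0 hfσ hfpσ
  have hfin := hfpσ.lintegral_lt_top.ne
  rw [hnorm] at hB' hfin
  exact ENNReal.rpow_one_sub_le_of_le_mul_rpow ((div_lt_one hpp'.symm.pos).mpr hp) hfin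
    (hdual.trans hB')

theorem rpow_setLIntegral_rpow_le_of_forall (hE : MeasurableSet E) (hΦ : Measurable Φ)
    (hσ : Integrable σ μ) (hp : 1 < p)
    (hB : ∀ f : Ω → ℝ, Measurable f → 0 ≤ f → Integrable (fun x => f x * σ x) μ →
      Integrable (fun x => f x ^ p * σ x) μ →
      ∫⁻ x in E, Φ x * ENNReal.ofReal (f x * σ x) ∂μ
        ≤ B * (∫⁻ x, ENNReal.ofReal (f x ^ p * σ x) ∂μ) ^ (1 / p)) :
    (∫⁻ x in E, Φ x ^ (p / (p - 1)) * ENNReal.ofReal (σ x) ∂μ) ^ (1 - 1 / p) ≤ B := by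
  have hp' : 0 < p / (p - 1) := div_pos (one_pos.trans hp) (sub_pos.mpr hp)
  have hσ' : AEMeasurable (fun x => ENNReal.ofReal (σ x)) (μ.restrict E) :=
    ENNReal.measurable_ofReal.comp_aemeasurable hσ.aemeasurable.restrict
  have hsup : ∫⁻ x in E, Φ x ^ (p / (p - 1)) * ENNReal.ofReal (σ x) ∂μ
      = ⨆ n : ℕ, ∫⁻ x in E, min (Φ x) n ^ (p / (p - 1)) * ENNReal.ofReal (σ x) ∂μ := by
    rw [← lintegral_iSup' (f := fun n x => min (Φ x) n ^ (p / (p - 1)) * ENNReal.ofReal (σ x))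
      (fun n => ((hΦ.min measurable_const).pow_const _).aemeasurable.mul hσ')
      (ae_of_all _ fun x k l hkl => by dsimp only; gcongr)]
    simp_rw [← ENNReal.iSup_mul, ← ENNReal.iSup_rpow _ hp', ENNReal.iSup_min_natCast]
  rw [hsup, ENNReal.iSup_rpow _ (sub_pos.mpr ((div_lt_one (one_pos.trans hp)).mpr hp))]
  exact iSup_le (rpow_setLIntegral_min_rpow_le_of_forall hE hΦ hσ hp hB)

end LpDuality

section CondExp

variable {Ω : Type*} {m m0 : MeasurableSpace Ω} {μ : Measure Ω}

theorem lintegral_mul_ofReal_condExp (hm : m ≤ m0) [SigmaFinite (μ.trim hm)] {k : Ω → ℝ}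
    (hk : Integrable k μ) (hk0 : 0 ≤ᵐ[μ] k) {h : Ω → ℝ≥0∞} (hh : Measurable[m] h) :
    ∫⁻ x, h x * ENNReal.ofReal (k x) ∂μ = ∫⁻ x, h x * ENNReal.ofReal (μ[k|m] x) ∂μ := by
  -- The densities `k` and `μ[k|m]` define measures that agree on `m`.
  have htrim : (μ.withDensity fun x => ENNReal.ofReal (k x)).trim hm
      = (μ.withDensity fun x => ENNReal.ofReal (μ[k|m] x)).trim hm := by
    refine @Measure.ext Ω m _ _ fun s hs => ?_
    rw [trim_measurableSet_eq hm hs, trim_measurableSet_eq hm hs,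
      withDensity_apply _ (hm s hs), withDensity_apply _ (hm s hs),
      ← ofReal_integral_eq_lintegral_ofReal hk.restrict (ae_restrict_of_ae hk0),
      ← ofReal_integral_eq_lintegral_ofReal integrable_condExp.restrict
        (ae_restrict_of_ae (condExp_nonneg hk0)),
      setIntegral_condExp hm hk hs]
  have hk' : AEMeasurable (fun x => ENNReal.ofReal (k x)) μ :=
    ENNReal.measurable_ofReal.comp_aemeasurable hk.aemeasurable
  have hEk : AEMeasurable (fun x => ENNReal.ofReal (μ[k|m] x)) μ :=
    ENNReal.measurable_ofReal.comp_aemeasurable integrable_condExp.aemeasurable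
  have hh0 : AEMeasurable h μ := (hh.mono hm le_rfl).aemeasurable
  simp_rw [mul_comm (h _)]
  rw [← Pi.mul_def, ← lintegral_withDensity_eq_lintegral_mul₀ hk' hh0,
    ← lintegral_trim hm hh, htrim, lintegral_trim hm hh,
    lintegral_withDensity_eq_lintegral_mul₀ hEk hh0]
  rfl

theorem lintegral_mul_ofReal_condExp_mul_ofReal (hm : m ≤ m0) [SigmaFinite (μ.trim hm)]
    {w k : Ω → ℝ} (hw : Integrable w μ) (hw0 : 0 ≤ᵐ[μ] w) (hk : Integrable k μ)
    (hk0 : 0 ≤ᵐ[μ] k) {h : Ω → ℝ≥0∞} (hh : Measurable[m] h) :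
    ∫⁻ x, h x * ENNReal.ofReal (μ[w|m] x) * ENNReal.ofReal (k x) ∂μ
      = ∫⁻ x, h x * ENNReal.ofReal (w x) * ENNReal.ofReal (μ[k|m] x) ∂μ := by
  have hEw : Measurable[m] fun x => ENNReal.ofReal (μ[w|m] x) :=
    ENNReal.measurable_ofReal.comp stronglyMeasurable_condExp.measurable
  have hEk : Measurable[m] fun x => ENNReal.ofReal (μ[k|m] x) :=
    ENNReal.measurable_ofReal.comp stronglyMeasurable_condExp.measurable
  have hkw := lintegral_mul_ofReal_condExp hm hk hk0 (hh.mul hEw)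
  have hwk := lintegral_mul_ofReal_condExp hm hw hw0 (hh.mul hEk)
  simp only [Pi.mul_apply] at hkw hwk
  simp_rw [hkw, mul_right_comm (h _) (ENNReal.ofReal (μ[w|m] _)), ← hwk,
    mul_right_comm (h _)]

theorem setLIntegral_ofReal_condExp_mul_mul_ofReal (hm : m ≤ m0) [SigmaFinite (μ.trim hm)]
    {E : Set Ω} (hE : MeasurableSet[m] E) {a : Ω → ℝ} (ha : StronglyMeasurable[m] a)
    {w g : Ω → ℝ} (hw : Integrable w μ) (hw0 : 0 ≤ᵐ[μ] w) (hg : Integrable g μ)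
    (hg0 : 0 ≤ᵐ[μ] g) :
    ∫⁻ x in E, ENNReal.ofReal (μ[w|m] x * a x) * ENNReal.ofReal (g x) ∂μ
      = ∫⁻ x in E, ENNReal.ofReal (w x) * ENNReal.ofReal (a x * μ[g|m] x) ∂μ := by
  set h : Ω → ℝ≥0∞ := E.indicator fun x => ENNReal.ofReal (a x)
  have hh : Measurable[m] h := (ENNReal.measurable_ofReal.comp ha.measurable).indicator hE
  rw [← lintegral_indicator (hm E hE), ← lintegral_indicator (hm E hE)]
  calc _ = ∫⁻ x, h x * ENNReal.ofReal (μ[w|m] x) * ENNReal.ofReal (g x) ∂μ := by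
        refine lintegral_congr_ae ?_
        filter_upwards [condExp_nonneg (m := m) hw0] with x hx
        by_cases hxE : x ∈ E
        · simp only [h, indicator_of_mem hxE, ENNReal.ofReal_mul hx]
          ring
        · simp [h, hxE]
    _ = ∫⁻ x, h x * ENNReal.ofReal (w x) * ENNReal.ofReal (μ[g|m] x) ∂μ :=
        lintegral_mul_ofReal_condExp_mul_ofReal hm hw hw0 hg hg0 hh
    _ = _ := by
        refine lintegral_congr_ae ?_
        filter_upwards [condExp_nonneg (m := m) hg0] with x hx
        by_cases hxE : x ∈ E
        · simp only [h, indicator_of_mem hxE, ENNReal.ofReal_mul' hx]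
          ring
        · simp [h, hxE]

end CondExp

section Filtration

variable {Ω : Type*} {m : MeasurableSpace Ω} {μ : Measure Ω} {ℱ : Filtration ℤ m}
  {α : ℤ → Ω → ℝ}

variable (μ ℱ α) in
/-- The operator `T_α g = ∑ᵢ αᵢ 𝔼ᵢ g`, with each term truncated below at `0`. -/
noncomputable def weightedCondExpSum (g : Ω → ℝ) (x : Ω) : ℝ≥0∞ :=
  ∑' i : ℤ, ENNReal.ofReal (α i x * (μ[g|ℱ i]) x)

variable (μ ℱ α) in
noncomputable def weightedCondExpTail (ω : Ω → ℝ) (i : ℤ) (x : Ω) : ℝ≥0∞ :=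
  ∑' j : {j : ℤ // i ≤ j}, ENNReal.ofReal ((μ[ω|ℱ j.1]) x * α j.1 x)

variable (μ ℱ α) in
/-- `‖T_α(f σ)‖_{L^{q,∞}(ω)} ≤ C ‖f‖_{L^p(σ)}` for all admissible `f ≥ 0`. -/
def WeakTypeBound (σ ω : Ω → ℝ) (p q C : ℝ) : Prop :=
  ∀ f : Ω → ℝ, Measurable f → 0 ≤ f →
    Integrable (fun x => f x * σ x) μ → Integrable (fun x => f x ^ p * σ x) μ →
    ∀ lam : ℝ, 0 < lam →
      ENNReal.ofReal lam *
        (∫⁻ x in {x | ENNReal.ofReal lam < weightedCondExpSum μ ℱ α (fun y => f y * σ y) x},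
          ENNReal.ofReal (ω x) ∂μ) ^ (1 / q)
      ≤ ENNReal.ofReal (C * (∫ x, f x ^ p * σ x ∂μ) ^ (1 / p))

variable (ℱ) in
theorem measurable_condExp_filtration (g : Ω → ℝ) (i : ℤ) :
    Measurable (μ[g|ℱ i]) :=
  (stronglyMeasurable_condExp.mono (ℱ.le i)).measurable

theorem measurable_weightedCondExpSum (hα : ∀ i, StronglyMeasurable[ℱ i] (α i))
    (g : Ω → ℝ) : Measurable (weightedCondExpSum μ ℱ α g) :=
  Measurable.tsum fun i => ENNReal.measurable_ofReal.comp
    (((hα i).mono (ℱ.le i)).measurable.mul (measurable_condExp_filtration ℱ g i))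

theorem measurable_weightedCondExpTail (hα : ∀ i, StronglyMeasurable[ℱ i] (α i))
    (ω : Ω → ℝ) (i : ℤ) : Measurable (weightedCondExpTail μ ℱ α ω i) :=
  Measurable.tsum fun j => ENNReal.measurable_ofReal.comp
    ((measurable_condExp_filtration ℱ ω j.1).mul ((hα j.1).mono (ℱ.le j.1)).measurable)

variable [SigmaFiniteFiltration μ ℱ]

theorem setLIntegral_weightedCondExpTail_mul_le (hα : ∀ i, StronglyMeasurable[ℱ i] (α i))
    {ω g : Ω → ℝ} (hω : Integrable ω μ) (hω0 : 0 ≤ᵐ[μ] ω) (hg : Integrable g μ)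
    (hg0 : 0 ≤ᵐ[μ] g) {i : ℤ} {E : Set Ω} (hE : MeasurableSet[ℱ i] E) :
    ∫⁻ x in E, weightedCondExpTail μ ℱ α ω i x * ENNReal.ofReal (g x) ∂μ
      ≤ ∫⁻ x in E, ENNReal.ofReal (ω x) * weightedCondExpSum μ ℱ α g x ∂μ := by
  have hαm : ∀ j, Measurable (α j) := fun j => ((hα j).mono (ℱ.le j)).measurable
  have hg' : AEMeasurable (fun x => ENNReal.ofReal (g x)) (μ.restrict E) :=
    ENNReal.measurable_ofReal.comp_aemeasurable hg.aemeasurable.restrict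
  have hω' : AEMeasurable (fun x => ENNReal.ofReal (ω x)) (μ.restrict E) :=
    ENNReal.measurable_ofReal.comp_aemeasurable hω.aemeasurable.restrict
  calc ∫⁻ x in E, weightedCondExpTail μ ℱ α ω i x * ENNReal.ofReal (g x) ∂μ
      = ∑' j : {j : ℤ // i ≤ j}, ∫⁻ x in E,
          ENNReal.ofReal (μ[ω|ℱ j.1] x * α j.1 x) * ENNReal.ofReal (g x) ∂μ := by
        simp_rw [weightedCondExpTail, ← ENNReal.tsum_mul_right]
        exact lintegral_tsum fun j => (ENNReal.measurable_ofReal.comp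
          ((measurable_condExp_filtration ℱ ω j.1).mul (hαm j.1))).aemeasurable.mul hg'
    _ = ∑' j : {j : ℤ // i ≤ j}, ∫⁻ x in E,
          ENNReal.ofReal (ω x) * ENNReal.ofReal (α j.1 x * μ[g|ℱ j.1] x) ∂μ :=
        tsum_congr fun j => setLIntegral_ofReal_condExp_mul_mul_ofReal (ℱ.le j.1)
          (ℱ.mono j.2 E hE) (hα j.1) hω hω0 hg hg0
    _ ≤ ∑' j : ℤ, ∫⁻ x in E,
          ENNReal.ofReal (ω x) * ENNReal.ofReal (α j x * μ[g|ℱ j] x) ∂μ :=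
        ENNReal.tsum_comp_le_tsum_of_injective Subtype.val_injective fun j =>
          ∫⁻ x in E, ENNReal.ofReal (ω x) * ENNReal.ofReal (α j x * μ[g|ℱ j] x) ∂μ
    _ = ∫⁻ x in E, ENNReal.ofReal (ω x) * weightedCondExpSum μ ℱ α g x ∂μ := by
        simp_rw [weightedCondExpSum, ← ENNReal.tsum_mul_left]
        exact (lintegral_tsum fun j => hω'.mul (ENNReal.measurable_ofReal.comp
          ((hαm j).mul (measurable_condExp_filtration ℱ g j))).aemeasurable).symm

theorem setLIntegral_weightedCondExpTail_mul_le_of_weakType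
    (hα : ∀ i, StronglyMeasurable[ℱ i] (α i)) {ω σ : Ω → ℝ} (hω : Integrable ω μ)
    (hω0 : 0 ≤ ω) (hσ0 : 0 ≤ σ) {p q C : ℝ} (hp : 0 ≤ p) (hq : 1 < q)
    (hweak : WeakTypeBound μ ℱ α σ ω p q C) {i : ℤ} {E : Set Ω} (hE : MeasurableSet[ℱ i] E)
    {f : Ω → ℝ} (hf : Measurable f) (hf0 : 0 ≤ f) (hfσ : Integrable (fun x => f x * σ x) μ)
    (hfpσ : Integrable (fun x => f x ^ p * σ x) μ) :
    ∫⁻ x in E, weightedCondExpTail μ ℱ α ω i x * ENNReal.ofReal (f x * σ x) ∂μ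
      ≤ ENNReal.ofReal (q / (q - 1) * C) * (∫⁻ x in E, ENNReal.ofReal (ω x) ∂μ) ^ (1 - 1 / q)
        * (∫⁻ x, ENNReal.ofReal (f x ^ p * σ x) ∂μ) ^ (1 / p) := by
  have hfpσ0 : 0 ≤ᵐ[μ] fun x => f x ^ p * σ x :=
    ae_of_all _ fun x => mul_nonneg (Real.rpow_nonneg (hf0 x) p) (hσ0 x)
  have hnorm : ENNReal.ofReal (C * (∫ x, f x ^ p * σ x ∂μ) ^ (1 / p))
      = ENNReal.ofReal C * (∫⁻ x, ENNReal.ofReal (f x ^ p * σ x) ∂μ) ^ (1 / p) := by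
    rw [ENNReal.ofReal_mul' (Real.rpow_nonneg (integral_nonneg_of_ae hfpσ0) _),
      ← ENNReal.ofReal_rpow_of_nonneg (integral_nonneg_of_ae hfpσ0) (one_div_nonneg.mpr hp),
      ofReal_integral_eq_lintegral_ofReal hfpσ hfpσ0]
  calc _ ≤ ∫⁻ x in E,
          ENNReal.ofReal (ω x) * weightedCondExpSum μ ℱ α (fun y => f y * σ y) x ∂μ :=
        setLIntegral_weightedCondExpTail_mul_le hα hω (ae_of_all _ hω0) hfσ
          (ae_of_all _ fun x => mul_nonneg (hf0 x) (hσ0 x)) hE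
    _ ≤ ENNReal.ofReal (q / (q - 1))
          * ENNReal.ofReal (C * (∫ x, f x ^ p * σ x ∂μ) ^ (1 / p))
          * (∫⁻ x in E, ENNReal.ofReal (ω x) ∂μ) ^ (1 - 1 / q) :=
        setLIntegral_ofReal_mul_le_of_weakType hω.aemeasurable
          (measurable_weightedCondExpSum hα _) hq (hweak f hf hf0 hfσ hfpσ)
    _ = _ := by
        rw [hnorm, ENNReal.ofReal_mul (div_pos (one_pos.trans hq) (sub_pos.mpr hq)).le]
        ring

end Filtration

theorem weak_type_implies_testing_general
    {Ω : Type*} {m : MeasurableSpace Ω} {μ : Measure Ω}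
    (ℱ : Filtration ℤ m) [SigmaFiniteFiltration μ ℱ]
    (p q : ℝ) (hp : 1 < p) (hpq : p ≤ q)
    (α : ℤ → Ω → ℝ)
    (hα_meas : ∀ i, StronglyMeasurable[ℱ i] (α i))
    (ω σ : Ω → ℝ) (hω_nonneg : 0 ≤ ω) (hσ_nonneg : 0 ≤ σ)
    (hω_int : Integrable ω μ) (hσ_int : Integrable σ μ)
    (C : ℝ)
    (hweak : ∀ f : Ω → ℝ, Measurable f → 0 ≤ f →
      Integrable (fun x => f x * σ x) μ → Integrable (fun x => f x ^ p * σ x) μ →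
      ∀ lam : ℝ, 0 < lam →
        ENNReal.ofReal lam *
          (∫⁻ x in {x | ENNReal.ofReal lam <
              ∑' i : ℤ, ENNReal.ofReal (α i x * (μ[fun y => f y * σ y|ℱ i]) x)},
            ENNReal.ofReal (ω x) ∂μ) ^ (1 / q)
        ≤ ENNReal.ofReal (C * (∫ x, f x ^ p * σ x ∂μ) ^ (1 / p))) :
    ∃ C' : ℝ, 0 < C' ∧
      ∀ i : ℤ, ∀ E : Set Ω, MeasurableSet[ℱ i] E → μ E < ∞ →
        (∫⁻ x in E, (∑' j : {j : ℤ // i ≤ j},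
              ENNReal.ofReal ((μ[ω|ℱ j.1]) x * α j.1 x)) ^ (p / (p - 1))
            * ENNReal.ofReal (σ x) ∂μ) ^ (1 - 1 / p)
          ≤ ENNReal.ofReal (C' * C) * (∫⁻ x in E, ENNReal.ofReal (ω x) ∂μ) ^ (1 - 1 / q) := by
  have hq : 1 < q := hp.trans_le hpq
  refine ⟨q / (q - 1), div_pos (one_pos.trans hq) (sub_pos.mpr hq), fun i E hE _ => ?_⟩
  exact rpow_setLIntegral_rpow_le_of_forall (ℱ.le i E hE)
    (measurable_weightedCondExpTail hα_meas ω i) hσ_int hp fun f hf hf0 hfσ hfpσ =>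
      setLIntegral_weightedCondExpTail_mul_le_of_weakType hα_meas hω_int hω_nonneg hσ_nonneg
        (one_pos.trans hp).le hq hweak hE hf hf0 hfσ hfpσ

/-- **Necessity of the testing condition for the weak type estimate** (Theorem 1.5,
easy direction).  If `‖T_α(fσ)‖_{L^{q,∞}(ω)} ≤ C ‖f‖_{L^p(σ)}` for all nonnegative
`f ∈ L^p(σ)`, then the testing condition holds with constant `C' · C`, where `C'`
depends only on `p` and `q`. -/
theorem weak_type_implies_testing
    {Ω : Type*} {m : MeasurableSpace Ω} {μ : Measure Ω} [SigmaFinite μ]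
    (ℱ : Filtration ℤ m) [SigmaFiniteFiltration μ ℱ]
    (p q : ℝ) (hp : 1 < p) (hpq : p ≤ q)
    (α : ℤ → Ω → ℝ) (hα_nonneg : ∀ i, 0 ≤ α i)
    (hα_meas : ∀ i, StronglyMeasurable[ℱ i] (α i))
    (hα_bdd : ∀ i, ∃ B : ℝ, ∀ x, α i x ≤ B)
    (ω σ : Ω → ℝ) (hω_nonneg : 0 ≤ ω) (hσ_nonneg : 0 ≤ σ)
    (hω_meas : Measurable ω) (hσ_meas : Measurable σ)
    (hω_int : Integrable ω μ) (hσ_int : Integrable σ μ)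
    (C : ℝ) (hC : 0 ≤ C)
    (hweak : ∀ f : Ω → ℝ, Measurable f → 0 ≤ f →
      Integrable (fun x => f x * σ x) μ → Integrable (fun x => f x ^ p * σ x) μ →
      ∀ lam : ℝ, 0 < lam →
        ENNReal.ofReal lam *
          (∫⁻ x in {x | ENNReal.ofReal lam <
              ∑' i : ℤ, ENNReal.ofReal (α i x * (μ[fun y => f y * σ y|ℱ i]) x)},
            ENNReal.ofReal (ω x) ∂μ) ^ (1 / q)
        ≤ ENNReal.ofReal (C * (∫ x, f x ^ p * σ x ∂μ) ^ (1 / p))) :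
    ∃ C' : ℝ, 0 < C' ∧
      ∀ i : ℤ, ∀ E : Set Ω, MeasurableSet[ℱ i] E → μ E < ∞ →
        (∫⁻ x in E, (∑' j : {j : ℤ // i ≤ j},
              ENNReal.ofReal ((μ[ω|ℱ j.1]) x * α j.1 x)) ^ (p / (p - 1))
            * ENNReal.ofReal (σ x) ∂μ) ^ (1 - 1 / p)
          ≤ ENNReal.ofReal (C' * C) * (∫⁻ x in E, ENNReal.ofReal (ω x) ∂μ) ^ (1 - 1 / q) :=
  weak_type_implies_testing_general ℱ p q hp hpq α hα_meas ω σ hω_nonneg hσ_nonneg hω_int hσ_int C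
    hweak
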